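/- For every s > 5 there exist positive reals a ≠ b with λ_s(a,b) > S(a,b); in fact, with t = (b-a)/(b+a), λ_s(a,b) - S(a,b) = A(a,b)·((s-5)/6·t² + O(t⁴)) as t → 0⁺, which is positive for sufficiently small t. -/

import Mathlib

/-!
Take `a = 1 - t`, `b = 1 + t`, so that `A(a, b) = 1`. Comparing four derivatives of
`(1 + x) ^ p + (1 - x) ^ p` with those of its Taylor quartic gives two-sided quartic bounds, whence
`λ_s(1 - t, 1 + t) ≥ 1 + (s - 2) / 6 * t² - O(t³)`. On the other side
`log S(1 - t, 1 + t) = ((1 - t) log (1 - t) + (1 + t) log (1 + t)) / 2 ≤ t² / 2 + O(t³)` by the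
logarithmic series, so `S(1 - t, 1 + t) ≤ 1 + t² / 2 + O(t³)`. For `s > 5` the difference
`(s - 5) / 6 * t² - O(t³)` is positive once `t` is small.
-/

open Set Real Polynomial

theorem le_of_hasDerivAt_chain {F G : ℕ → ℝ → ℝ} {a b : ℝ} (n : ℕ)
    (hF : ∀ k < n, ∀ x ∈ Icc a b, HasDerivAt (F k) (F (k + 1) x) x)
    (hG : ∀ k < n, ∀ x ∈ Icc a b, HasDerivAt (G k) (G (k + 1) x) x)
    (ha : ∀ k < n, F k a ≤ G k a) (hn : ∀ x ∈ Icc a b, F n x ≤ G n x) :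
    ∀ x ∈ Icc a b, F 0 x ≤ G 0 x := by
  induction n generalizing F G with
  | zero => exact hn
  | succ n ih =>
    have h1 : ∀ x ∈ Icc a b, F 1 x ≤ G 1 x :=
      ih (F := fun k => F (k + 1)) (G := fun k => G (k + 1))
        (fun k hk => hF (k + 1) (by omega)) (fun k hk => hG (k + 1) (by omega))
        (fun k hk => ha (k + 1) (by omega)) hn
    have hF0 := hF 0 n.succ_pos
    have hG0 := hG 0 n.succ_pos
    exact image_le_of_deriv_right_le_deriv_boundary
      (fun x hx => (hF0 x hx).continuousAt.continuousWithinAt)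
      (fun x hx => (hF0 x (Ico_subset_Icc_self hx)).hasDerivWithinAt) (ha 0 n.succ_pos)
      (fun x hx => (hG0 x hx).continuousAt.continuousWithinAt)
      (fun x hx => (hG0 x (Ico_subset_Icc_self hx)).hasDerivWithinAt)
      (fun x hx => h1 x (Ico_subset_Icc_self hx))

/-- The `k`-th derivative of `x ↦ (1 + x) ^ p + (1 - x) ^ p` on `(-1, 1)`. -/
noncomputable def symmRpowDeriv (p : ℝ) (k : ℕ) (x : ℝ) : ℝ :=
  (descPochhammer ℝ k).eval p * ((1 + x) ^ (p - k) + (-1) ^ k * (1 - x) ^ (p - k))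

theorem hasDerivAt_symmRpowDeriv (p : ℝ) (k : ℕ) {x : ℝ} (hx : x ∈ Ioo (-1) 1) :
    HasDerivAt (symmRpowDeriv p k) (symmRpowDeriv p (k + 1) x) x := by
  have h₁ := ((hasDerivAt_id x).const_add 1).rpow_const (p := p - k)
    (Or.inl (by simp only [id]; linarith [hx.1]))
  have h₂ := ((hasDerivAt_id x).const_sub 1).rpow_const (p := p - k)
    (Or.inl (by simp only [id]; linarith [hx.2]))
  refine ((h₁.add (h₂.const_mul ((-1) ^ k))).const_mul
    ((descPochhammer ℝ k).eval p)).congr_deriv ?_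
  simp only [symmRpowDeriv, descPochhammer_succ_eval, id, pow_succ]
  push_cast
  ring_nf

theorem symmRpowDeriv_zero (p x : ℝ) : symmRpowDeriv p 0 x = (1 + x) ^ p + (1 - x) ^ p := by
  simp [symmRpowDeriv]

theorem symmRpowDeriv_four (p x : ℝ) :
    symmRpowDeriv p 4 x =
      p * (p - 1) * (p - 2) * (p - 3) * ((1 + x) ^ (p - 4) + (1 - x) ^ (p - 4)) := by
  norm_num [symmRpowDeriv, descPochhammer_succ_eval]

theorem hasDerivAt_iterate_derivative_eval (q : ℝ[X]) (k : ℕ) (x : ℝ) :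
    HasDerivAt (fun y => (derivative^[k] q).eval y) ((derivative^[k + 1] q).eval x) x := by
  simpa only [Function.iterate_succ_apply'] using (derivative^[k] q).hasDerivAt x

noncomputable def evenQuartic (a b : ℝ) : ℝ[X] := C 2 + C a * X ^ 2 + C b * X ^ 4

theorem symmRpowDeriv_zero_eq_evenQuartic (p b : ℝ) {k : ℕ} (hk : k < 4) :
    symmRpowDeriv p k 0 = (derivative^[k] (evenQuartic (p * (p - 1)) b)).eval 0 := by
  interval_cases k <;> norm_num [symmRpowDeriv, evenQuartic, descPochhammer_succ_eval,
    Function.iterate_succ_apply']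

theorem evenQuartic_iterate_four (a b x : ℝ) :
    (derivative^[4] (evenQuartic a b)).eval x = 24 * b := by
  norm_num [evenQuartic, Function.iterate_succ_apply']
  ring

theorem le_one_add_rpow_add_one_sub_rpow_of_fourth_deriv {p b t : ℝ} (ht : t ∈ Ico 0 1)
    (hb : ∀ x ∈ Icc 0 t,
      24 * b ≤ p * (p - 1) * (p - 2) * (p - 3) * ((1 + x) ^ (p - 4) + (1 - x) ^ (p - 4))) :
    2 + p * (p - 1) * t ^ 2 + b * t ^ 4 ≤ (1 + t) ^ p + (1 - t) ^ p := by
  have hIoo (x : ℝ) (hx : x ∈ Icc 0 t) : x ∈ Ioo (-1) 1 :=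
    ⟨by linarith [hx.1], by linarith [hx.2, ht.2]⟩
  have := le_of_hasDerivAt_chain 4
    (F := fun k y => (derivative^[k] (evenQuartic (p * (p - 1)) b)).eval y) (G := symmRpowDeriv p)
    (fun k _ x _ => hasDerivAt_iterate_derivative_eval _ k x)
    (fun k _ x hx => hasDerivAt_symmRpowDeriv p k (hIoo x hx))
    (fun k hk => (symmRpowDeriv_zero_eq_evenQuartic p b hk).ge)
    (fun x hx => by simpa only [evenQuartic_iterate_four, symmRpowDeriv_four] using hb x hx)
    t ⟨ht.1, le_rfl⟩
  simpa [evenQuartic, symmRpowDeriv_zero] using this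

theorem one_add_rpow_add_one_sub_rpow_le_of_fourth_deriv {p b t : ℝ} (ht : t ∈ Ico 0 1)
    (hb : ∀ x ∈ Icc 0 t,
      p * (p - 1) * (p - 2) * (p - 3) * ((1 + x) ^ (p - 4) + (1 - x) ^ (p - 4)) ≤ 24 * b) :
    (1 + t) ^ p + (1 - t) ^ p ≤ 2 + p * (p - 1) * t ^ 2 + b * t ^ 4 := by
  have hIoo (x : ℝ) (hx : x ∈ Icc 0 t) : x ∈ Ioo (-1) 1 :=
    ⟨by linarith [hx.1], by linarith [hx.2, ht.2]⟩
  have := le_of_hasDerivAt_chain 4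
    (F := symmRpowDeriv p) (G := fun k y => (derivative^[k] (evenQuartic (p * (p - 1)) b)).eval y)
    (fun k _ x hx => hasDerivAt_symmRpowDeriv p k (hIoo x hx))
    (fun k _ x _ => hasDerivAt_iterate_derivative_eval _ k x)
    (fun k hk => (symmRpowDeriv_zero_eq_evenQuartic p b hk).le)
    (fun x hx => by simpa only [evenQuartic_iterate_four, symmRpowDeriv_four] using hb x hx)
    t ⟨ht.1, le_rfl⟩
  simpa [evenQuartic, symmRpowDeriv_zero] using this

theorem two_le_one_add_rpow_add_one_sub_rpow {q x : ℝ} (hq : 1 ≤ q) (hx : x ∈ Icc (-1) 1) :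
    2 ≤ (1 + x) ^ q + (1 - x) ^ q := by
  have h := (convexOn_rpow hq).2 (x := 1 + x) (y := 1 - x)
    (by simp only [mem_Ici]; linarith [hx.1]) (by simp only [mem_Ici]; linarith [hx.2])
    (by norm_num : (0 : ℝ) ≤ 1 / 2) (by norm_num : (0 : ℝ) ≤ 1 / 2) (by norm_num)
  simp only [smul_eq_mul] at h
  rw [show 1 / 2 * (1 + x) + 1 / 2 * (1 - x) = (1 : ℝ) by ring, one_rpow] at h
  linarith

theorem quartic_le_one_add_rpow_add_one_sub_rpow {p t : ℝ} (hp : 5 ≤ p) (ht : t ∈ Ico 0 1) :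
    2 + p * (p - 1) * t ^ 2 + p * (p - 1) * (p - 2) * (p - 3) / 12 * t ^ 4 ≤
      (1 + t) ^ p + (1 - t) ^ p := by
  refine le_one_add_rpow_add_one_sub_rpow_of_fourth_deriv ht fun x hx => ?_
  have h₂ := two_le_one_add_rpow_add_one_sub_rpow (q := p - 4) (x := x) (by linarith)
    ⟨by linarith [hx.1], by linarith [hx.2, ht.2]⟩
  have hc : 0 ≤ p * (p - 1) * (p - 2) * (p - 3) :=
    mul_nonneg (mul_nonneg (mul_nonneg (by linarith) (by linarith)) (by linarith)) (by linarith)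
  nlinarith

theorem one_add_rpow_add_one_sub_rpow_le_quartic {p t : ℝ} (hp : 4 ≤ p) (ht : t ∈ Ico 0 1) :
    (1 + t) ^ p + (1 - t) ^ p ≤
      2 + p * (p - 1) * t ^ 2 +
        p * (p - 1) * (p - 2) * (p - 3) / 12 * (1 + t) ^ (p - 4) * t ^ 4 := by
  refine one_add_rpow_add_one_sub_rpow_le_of_fourth_deriv ht fun x hx => ?_
  have h₁ : (1 + x) ^ (p - 4) ≤ (1 + t) ^ (p - 4) :=
    rpow_le_rpow (by linarith [hx.1]) (by linarith [hx.2]) (by linarith)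
  have h₂ : (1 - x) ^ (p - 4) ≤ (1 + t) ^ (p - 4) :=
    (rpow_le_one (by linarith [hx.2, ht.2]) (by linarith [hx.1]) (by linarith)).trans
      (one_le_rpow (by linarith [ht.1]) (by linarith))
  have hc : 0 ≤ p * (p - 1) * (p - 2) * (p - 3) :=
    mul_nonneg (mul_nonneg (mul_nonneg (by linarith) (by linarith)) (by linarith)) (by linarith)
  nlinarith

theorem one_add_rpow_le_one_add_mul {r t : ℝ} (hr : 1 ≤ r) (ht : t ∈ Icc 0 1) :
    (1 + t) ^ r ≤ 1 + (2 ^ r - 1) * t := by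
  have h := (convexOn_rpow hr).2 (x := 1) (y := 2) (by simp) (by simp only [mem_Ici]; norm_num)
    (by linarith [ht.2] : 0 ≤ 1 - t) ht.1 (by ring)
  simp only [smul_eq_mul, one_rpow] at h
  rw [show (1 - t) * 1 + t * 2 = 1 + t by ring] at h
  linarith

theorem sub_mul_cube_le_div {α β κ K t : ℝ} (hα : 0 ≤ α) (hβ : 0 ≤ β) (hκ : 0 ≤ κ)
    (ht0 : 0 ≤ t) (ht1 : t ≤ 1) (hK0 : 0 ≤ K) (hK : K ≤ 1 + κ * t) :
    1 + (α - β) * t ^ 2 - (β * κ + α * β * (1 + κ)) * t ^ 3 ≤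
      (1 + α * t ^ 2) / (1 + β * K * t ^ 2) := by
  have hKt : K * t ≤ 1 + κ := by nlinarith
  calc 1 + (α - β) * t ^ 2 - (β * κ + α * β * (1 + κ)) * t ^ 3
      ≤ (1 + α * t ^ 2) * (1 - β * K * t ^ 2) := by
        have e₁ : β * t ^ 2 * K ≤ β * t ^ 2 * (1 + κ * t) := by gcongr
        have e₂ : α * β * t ^ 3 * (K * t) ≤ α * β * t ^ 3 * (1 + κ) := by gcongr
        nlinarith
    _ ≤ (1 + α * t ^ 2) / (1 + β * K * t ^ 2) := by
        rw [le_div_iff₀ (by positivity)]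
        nlinarith [mul_nonneg (by positivity : 0 ≤ 1 + α * t ^ 2) (sq_nonneg (β * K * t ^ 2))]

theorem exists_lambda_one_sub_one_add_lower {s : ℝ} (hs : 5 ≤ s) :
    ∃ C : ℝ, ∀ t ∈ Ioc (0 : ℝ) (1 / 2),
      1 + (s - 2) / 6 * t ^ 2 - C * t ^ 3 ≤
        (s - 1) / (s + 1) *
          (((1 - t) ^ (s + 1) + (1 + t) ^ (s + 1) - 2) / ((1 - t) ^ s + (1 + t) ^ s - 2)) := by
  obtain ⟨α, hα⟩ : ∃ α : ℝ, α = (s - 1) * (s - 2) / 12 := ⟨_, rfl⟩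
  obtain ⟨β, hβ⟩ : ∃ β : ℝ, β = (s - 2) * (s - 3) / 12 := ⟨_, rfl⟩
  obtain ⟨κ, hκ⟩ : ∃ κ : ℝ, κ = 2 ^ (s - 4) - 1 := ⟨_, rfl⟩
  have hα0 : 0 ≤ α := by rw [hα]; nlinarith
  have hβ0 : 0 ≤ β := by rw [hβ]; nlinarith
  have hκ0 : 0 ≤ κ := by rw [hκ, sub_nonneg]; exact one_le_rpow (by norm_num) (by linarith)
  refine ⟨β * κ + α * β * (1 + κ), fun t ⟨ht0, ht1⟩ => ?_⟩
  have htIco : t ∈ Ico 0 1 := ⟨ht0.le, by linarith⟩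
  set K := (1 + t) ^ (s - 4)
  have hK1 : 1 ≤ K := one_le_rpow (by linarith) (by linarith)
  have hK : K ≤ 1 + κ * t :=
    hκ ▸ one_add_rpow_le_one_add_mul (by linarith) ⟨ht0.le, by linarith⟩
  have hN :
      (s + 1) * s * t ^ 2 * (1 + α * t ^ 2) ≤ (1 - t) ^ (s + 1) + (1 + t) ^ (s + 1) - 2 := by
    have := quartic_le_one_add_rpow_add_one_sub_rpow (p := s + 1) (by linarith) htIco
    rw [hα]; linear_combination this
  have hD : (1 - t) ^ s + (1 + t) ^ s - 2 ≤ s * (s - 1) * t ^ 2 * (1 + β * K * t ^ 2) := by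
    have := one_add_rpow_add_one_sub_rpow_le_quartic (p := s) (by linarith) htIco
    rw [hβ]; linear_combination this
  have hD0 : 0 < (1 - t) ^ s + (1 + t) ^ s - 2 := by
    have := quartic_le_one_add_rpow_add_one_sub_rpow hs htIco
    have hs₁ : 0 < s * (s - 1) := by nlinarith
    have hs₂ : 0 ≤ (s - 2) * (s - 3) := by nlinarith
    nlinarith [mul_pos hs₁ (pow_pos ht0 2),
      mul_nonneg (mul_nonneg hs₁.le hs₂) (pow_nonneg ht0.le 4)]
  have e : (s - 2) / 6 = α - β := by rw [hα, hβ]; ring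
  calc 1 + (s - 2) / 6 * t ^ 2 - (β * κ + α * β * (1 + κ)) * t ^ 3
      ≤ (1 + α * t ^ 2) / (1 + β * K * t ^ 2) :=
        e ▸ sub_mul_cube_le_div hα0 hβ0 hκ0 ht0.le (by linarith) (by linarith) hK
    _ ≤ _ := by
        rw [div_mul_div_comm, div_le_div_iff₀ (by positivity) (by nlinarith)]
        calc (1 + α * t ^ 2) * ((s + 1) * ((1 - t) ^ s + (1 + t) ^ s - 2))
            ≤ (1 + α * t ^ 2) * ((s + 1) * (s * (s - 1) * t ^ 2 * (1 + β * K * t ^ 2))) := by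
              gcongr
          _ = (s - 1) * ((s + 1) * s * t ^ 2 * (1 + α * t ^ 2)) * (1 + β * K * t ^ 2) := by ring
          _ ≤ (s - 1) * ((1 - t) ^ (s + 1) + (1 + t) ^ (s + 1) - 2) * (1 + β * K * t ^ 2) := by
              gcongr; linarith

theorem mul_log_add_mul_log_le {t : ℝ} (ht : t ∈ Icc 0 (1 / 2)) :
    (1 - t) * log (1 - t) + (1 + t) * log (1 + t) ≤ t ^ 2 + 4 * t ^ 3 := by
  have hlog (x : ℝ) (hx : |x| ≤ 1 / 2) : log (1 - x) ≤ -x - x ^ 2 / 2 + 2 * |x| ^ 3 := by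
    have h := abs_log_sub_add_sum_range_le (by linarith : |x| < 1) 2
    have h3 : |x| ^ 3 / (1 - |x|) ≤ 2 * |x| ^ 3 := by
      rw [div_le_iff₀ (by linarith)]; nlinarith [pow_nonneg (abs_nonneg x) 3]
    norm_num [Finset.sum_range_succ] at h
    linarith [(abs_le.mp h).2]
  obtain ⟨ht0, ht1⟩ := ht
  have h₁ := hlog t (by rwa [abs_of_nonneg ht0])
  have h₂ := hlog (-t) (by rwa [abs_neg, abs_of_nonneg ht0])
  rw [abs_of_nonneg ht0] at h₁
  rw [abs_neg, abs_of_nonneg ht0, sub_neg_eq_add] at h₂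
  nlinarith [mul_le_mul_of_nonneg_left h₁ (by linarith : 0 ≤ 1 - t),
    mul_le_mul_of_nonneg_left h₂ (by linarith : 0 ≤ 1 + t)]

theorem one_sub_rpow_mul_one_add_rpow_le {t : ℝ} (ht : t ∈ Icc 0 (1 / 2)) :
    (1 - t) ^ ((1 - t) / 2) * (1 + t) ^ ((1 + t) / 2) ≤ 1 + t ^ 2 / 2 + 5 * t ^ 3 := by
  obtain ⟨ht0, ht1⟩ := ht
  obtain ⟨x, hx⟩ : ∃ x : ℝ, x = t ^ 2 / 2 + 2 * t ^ 3 := ⟨_, rfl⟩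
  have hxt : x ≤ 3 / 2 * t ^ 2 := by nlinarith
  have hx0 : 0 ≤ x := by rw [hx]; positivity
  have hx1 : x ≤ 1 / 2 := by nlinarith
  calc (1 - t) ^ ((1 - t) / 2) * (1 + t) ^ ((1 + t) / 2)
      = exp (((1 - t) * log (1 - t) + (1 + t) * log (1 + t)) / 2) := by
        rw [rpow_def_of_pos (by linarith), rpow_def_of_pos (by linarith), ← exp_add]
        ring_nf
    _ ≤ exp x := exp_le_exp.mpr (by linarith [mul_log_add_mul_log_le ⟨ht0, ht1⟩])
    _ ≤ 1 / (1 - x) := exp_bound_div_one_sub_of_interval hx0 (by linarith)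
    _ ≤ 1 + x + 2 * x ^ 2 := by
        rw [div_le_iff₀ (by linarith)]; nlinarith [sq_nonneg x]
    _ ≤ 1 + t ^ 2 / 2 + 5 * t ^ 3 := by
        have : x ^ 2 ≤ 9 / 8 * t ^ 3 := by nlinarith [pow_le_pow_left₀ hx0 hxt 2]
        linarith [pow_nonneg ht0 3]

open Filter Topology in
theorem stmt18 (s : ℝ) (hs : 5 < s) :
    ∃ a b : ℝ, 0 < a ∧ 0 < b ∧ a ≠ b ∧
      a ^ (a / (a + b)) * b ^ (b / (a + b)) <
        ((s - 1) / (s + 1)) *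
          ((a ^ (s + 1) + b ^ (s + 1) - 2 * ((a + b) / 2) ^ (s + 1)) /
            (a ^ s + b ^ s - 2 * ((a + b) / 2) ^ s)) := by
  obtain ⟨C, hC⟩ := exists_lambda_one_sub_one_add_lower hs.le
  have hsmall : ∀ᶠ t in 𝓝[>] (0 : ℝ), t ∈ Ioc 0 (1 / 2) ∧ (C + 5) * t < (s - 5) / 6 :=
    .and (Ioc_mem_nhdsGT one_half_pos) <| nhdsWithin_le_nhds <|
      ((continuous_const_mul (C + 5)).tendsto' 0 0 (mul_zero _)).eventually
        (gt_mem_nhds (by linarith))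
  obtain ⟨t, ⟨ht0, ht1⟩, hCt⟩ := hsmall.exists
  refine ⟨1 - t, 1 + t, by linarith, by linarith, by linarith, ?_⟩
  rw [show (1 - t) + (1 + t) = 2 by ring, div_self two_ne_zero, one_rpow, one_rpow, mul_one]
  calc (1 - t) ^ ((1 - t) / 2) * (1 + t) ^ ((1 + t) / 2)
      ≤ 1 + t ^ 2 / 2 + 5 * t ^ 3 := one_sub_rpow_mul_one_add_rpow_le ⟨ht0.le, ht1⟩
    _ < 1 + (s - 2) / 6 * t ^ 2 - C * t ^ 3 := by nlinarith [pow_pos ht0 2]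
    _ ≤ _ := hC t ⟨ht0, ht1⟩
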